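/- Let u be a unit quaternion. Consider the point (1, u) ∈ S³×S³ (the image of the immersion f : S³ → S³×S³, f(u) = (1,u)), whose tangent image consists of the vectors Z = (0, V) with Re(u⁻¹V) = 0. Then: (i) for all such Z = (0,V) and Z' = (0,V'), g(Z', J(Z)) = 0, i.e. the immersion is Lagrangian; (ii) P(Z) = −(1/2)·Z + (√3/2)·J(Z) for every such Z, i.e. all three angle functions of this Lagrangian immersion satisfy 2θ = 2π/3. Here J, g, and P are evaluated at the point (1,u). -/

import Mathlib

open Quaternion

noncomputable section

/-- Euclidean inner product on ℍ ≅ ℝ⁴: ⟨a,b⟩ = Re(a · conj b). -/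
def innQ (a b : ℍ[ℝ]) : ℝ := (a * star b).re

/-- Euclidean product inner product on ℍ × ℍ. -/
def innP (Z Z' : ℍ[ℝ] × ℍ[ℝ]) : ℝ := innQ Z.1 Z'.1 + innQ Z.2 Z'.2

/-- Tangency to S³ × S³ at (p,q). -/
def Tangent (p q : ℍ[ℝ]) (Z : ℍ[ℝ] × ℍ[ℝ]) : Prop :=
  (p⁻¹ * Z.1).re = 0 ∧ (q⁻¹ * Z.2).re = 0

/-- The almost complex structure J of the nearly Kähler S³×S³ at the point (p,q). -/
def Jmap (p q : ℍ[ℝ]) (Z : ℍ[ℝ] × ℍ[ℝ]) : ℍ[ℝ] × ℍ[ℝ] :=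
  (Real.sqrt 3)⁻¹ •
    ((2 * (p * q⁻¹ * Z.2) - Z.1, -(2 * (q * p⁻¹ * Z.1)) + Z.2) : ℍ[ℝ] × ℍ[ℝ])

/-- The nearly Kähler metric g at the point (p,q). -/
def gmet (p q : ℍ[ℝ]) (Z Z' : ℍ[ℝ] × ℍ[ℝ]) : ℝ :=
  (4/3) * (innQ Z.1 Z'.1 + innQ Z.2 Z'.2)
    - (2/3) * (innQ (p⁻¹ * Z.1) (q⁻¹ * Z'.2) + innQ (p⁻¹ * Z'.1) (q⁻¹ * Z.2))

/-- The almost product structure P at the point (p,q). -/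
def Pmap (p q : ℍ[ℝ]) (Z : ℍ[ℝ] × ℍ[ℝ]) : ℍ[ℝ] × ℍ[ℝ] :=
  (p * q⁻¹ * Z.2, q * p⁻¹ * Z.1)

/-- The usual product structure Q. -/
def Qmap (Z : ℍ[ℝ] × ℍ[ℝ]) : ℍ[ℝ] × ℍ[ℝ] := (-Z.1, Z.2)

/-- The quaternion units i, j, k. -/
def qi : ℍ[ℝ] := ⟨0, 1, 0, 0⟩
def qj : ℍ[ℝ] := ⟨0, 0, 1, 0⟩
def qk : ℍ[ℝ] := ⟨0, 0, 0, 1⟩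

/-! At (p, q) the structures send a vertical vector (0, V) to J(0, V) = (2pq⁻¹V, V)/√3 and
P(0, V) = (pq⁻¹V, 0), so the identity for P is linear algebra. In g((0, V'), J(0, V)) the
mixed term contributes ⟨q⁻¹V, q⁻¹V'⟩, which equals ⟨V, V'⟩ because left multiplication by a
unit quaternion is an isometry of ℍ; it cancels the diagonal term. -/

open scoped RealInnerProductSpace

theorem innQ_eq_inner (a b : ℍ[ℝ]) : innQ a b = ⟪a, b⟫ := rfl

theorem Quaternion.inner_mul_mul_left (c a b : ℍ[ℝ]) :
    ⟪c * a, c * b⟫ = normSq c * ⟪a, b⟫ := by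
  simp only [inner_def, re_mul, imI_mul, imJ_mul, imK_mul, re_star, imI_star, imJ_star, imK_star,
    normSq_def']
  ring

theorem Jmap_zero_left (p q V : ℍ[ℝ]) :
    Jmap p q (0, V) = ((2 / √3) • (p * (q⁻¹ * V)), (√3)⁻¹ • V) := by
  have two_mul_eq_smul : (2 : ℍ[ℝ]) * (p * (q⁻¹ * V)) = (2 : ℝ) • (p * (q⁻¹ * V)) := by
    rw [two_mul, two_smul]
  simp only [Jmap, Prod.smul_mk, mul_zero, sub_zero, neg_zero, zero_add, mul_assoc,
    two_mul_eq_smul, smul_smul, div_eq_inv_mul, mul_comm]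

theorem Pmap_zero_left (p q V : ℍ[ℝ]) : Pmap p q (0, V) = (p * (q⁻¹ * V), 0) := by
  simp [Pmap, mul_assoc]

theorem gmet_zero_left_Jmap_zero_left {p q : ℍ[ℝ]} (hp : p ≠ 0) (hq : ‖q‖ = 1) (V V' : ℍ[ℝ]) :
    gmet p q (0, V') (Jmap p q (0, V)) = 0 := by
  have hq' : normSq q⁻¹ = 1 := by simp [normSq_eq_norm_mul_self, hq]
  simp only [gmet, Jmap_zero_left, mul_zero, mul_smul_comm, inv_mul_cancel_left₀ hp]
  simp only [innQ_eq_inner, inner_zero_left, real_inner_smul_left, real_inner_smul_right,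
    inner_mul_mul_left, hq', real_inner_comm V V']
  ring

theorem Pmap_zero_left_eq_neg_half_add_Jmap (p q V : ℍ[ℝ]) :
    Pmap p q (0, V) =
      -((1/2 : ℝ) • ((0, V) : ℍ[ℝ] × ℍ[ℝ])) + (√3 / 2) • Jmap p q (0, V) := by
  have h : √3 / 2 * (2 / √3) = 1 := by field_simp
  have h' : √3 / 2 * (√3)⁻¹ = 1 / 2 := by field_simp
  rw [Pmap_zero_left, Jmap_zero_left, Prod.ext_iff]
  simp only [Prod.fst_add, Prod.snd_add, Prod.fst_neg, Prod.snd_neg, Prod.smul_fst,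
    Prod.smul_snd, smul_smul, h, h']
  constructor <;> module

/-- the immersion u ↦ (1,u) is Lagrangian with all angle functions
satisfying 2θ = 2π/3, i.e. P = -(1/2)·id + (√3/2)·J on its tangent space. -/
theorem stmt_14 (u : ℍ[ℝ]) (hu : ‖u‖ = 1) :
    (∀ V V' : ℍ[ℝ], (u⁻¹ * V).re = 0 → (u⁻¹ * V').re = 0 →
      gmet 1 u (0, V') (Jmap 1 u (0, V)) = 0) ∧
    (∀ V : ℍ[ℝ], (u⁻¹ * V).re = 0 →
      Pmap 1 u (0, V) =
        -((1/2 : ℝ) • ((0, V) : ℍ[ℝ] × ℍ[ℝ])) + (Real.sqrt 3 / 2) • Jmap 1 u (0, V)) :=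
  ⟨fun V V' _ _ => gmet_zero_left_Jmap_zero_left one_ne_zero hu V V',
    fun V _ => Pmap_zero_left_eq_neg_half_add_Jmap 1 u V⟩
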